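/- arXiv:0704.1736 — 2 statements merged into one kernel-verified Lean document; each statement's English description precedes it below -/
import Mathlib

section
/- Let C be a quantum circuit of ∧Z and J gates and let G_C be its labelled entanglement graph. Then G_C is exactly the entanglement graph of the measurement pattern obtained from C by the circuit-to-pattern translation, and the collection of vertex-disjoint input–output paths formed by the vertices lying on a common circuit wire defines a flow of the geometry (G_C, I, O). -/
/-!
STATEMENT 7: For a circuit `C` of `⋀Z` and `J` gates, the labelled entanglement graph
`G_C` is exactly the entanglement graph of the measurement pattern obtained from `C`
by the circuit-to-pattern translation, and the vertex-disjoint input–output paths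
formed by the vertices lying on a common circuit wire define a flow of `(G_C, I, O)`.
-/

namespace MBQC

attribute [local instance] Classical.propDecidable

/-- Gates of the universal family `{⋀Z, J(α)}`. -/
inductive Gate (n : ℕ) where
  | cz (i j : Fin n)
  | J (α : ℝ) (i : Fin n)

/-- A quantum circuit on `n` logical qubits: a list of gates, applied left-to-right. -/
abbrev Circuit (n : ℕ) := List (Gate n)

namespace Gate

/-- The wires a gate acts on. -/
def acts {n : ℕ} : Gate n → Finset (Fin n)
  | .cz i j => {i, j}
  | .J _ i => {i}

def isJ {n : ℕ} : Gate n → Bool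
  | .J _ _ => true
  | _ => false

end Gate

/-- The circuit `cc` can be executed in `d` layers: each qubit partakes in at most one
gate per layer, and gates sharing a wire keep their relative order. -/
def LayeredLE {n : ℕ} (cc : Circuit n) (d : ℕ) : Prop :=
  ∃ τ : ℕ → ℕ, (∀ p, p < cc.length → τ p < d) ∧
    ∀ p q (gp gq : Gate n), p < q → cc[p]? = some gp → cc[q]? = some gq →
      ¬ Disjoint gp.acts gq.acts → τ p < τ q

/-- The depth of a circuit: the least number of layers. -/
noncomputable def cdepth {n : ℕ} (cc : Circuit n) : ℕ := sInf {d | LayeredLE cc d}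

/-- The number `G₂` of `J` gates of a circuit. -/
def countJ {n : ℕ} (cc : Circuit n) : ℕ := cc.countP Gate.isJ

/-- The number of `J` gates on wire `i`. -/
def stageAfter {n : ℕ} (cc : Circuit n) (i : Fin n) : ℕ :=
  (cc.filter fun g => match g with | .J _ j => j == i | _ => false).length

/-- The current qubit index (stage) of wire `i` just before gate `p`. -/
def stAt {n : ℕ} (cc : Circuit n) (p : ℕ) (i : Fin n) : ℕ := stageAfter (cc.take p) i

/-- In the circuit-to-pattern translation, the qubits are indexed by
`(wire, stage) : Fin n × ℕ`: `(i, k)` is the `(k+1)`-st qubit on wire `i`; each `J`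
gate on wire `i` extends the wire by one new qubit. `gateEdge cc p u v` says that gate
`p` of `cc` contributes the entanglement edge `{u, v}`. -/
def gateEdge {n : ℕ} (cc : Circuit n) (p : ℕ) (u v : Fin n × ℕ) : Prop :=
  ∃ g, cc[p]? = some g ∧
    match g with
    | .cz i j => u = (i, stAt cc p i) ∧ v = (j, stAt cc p j)
    | .J _ i => u = (i, stAt cc p i) ∧ v = (i, stAt cc p i + 1)

/-- The entanglement graph of the pattern corresponding to the circuit `cc`
(the labelled entanglement graph `G_C`). -/
def circGraph {n : ℕ} (cc : Circuit n) : SimpleGraph (Fin n × ℕ) :=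
  SimpleGraph.fromRel fun u v => ∃ p, p < cc.length ∧ gateEdge cc p u v

/-- The qubits actually used by the pattern of `cc`. -/
def vertsUsed {n : ℕ} (cc : Circuit n) : Finset (Fin n × ℕ) :=
  (Finset.univ ×ˢ Finset.range (cc.length + 1)).filter fun q => q.2 ≤ stageAfter cc q.1

/-- The flow function of the translated pattern: successor on the same wire. -/
def wireSucc {n : ℕ} (q : Fin n × ℕ) : Fin n × ℕ := (q.1, q.2 + 1)

/-- Output qubits: the last qubit of each wire. -/
def outQ {n : ℕ} (cc : Circuit n) : Finset (Fin n × ℕ) :=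
  Finset.univ.image fun i : Fin n => (i, stageAfter cc i)

/-- Input qubits: the first qubit of each wire. -/
def inQ (n : ℕ) : Finset (Fin n × ℕ) :=
  Finset.univ.image fun i : Fin n => ((i, 0) : Fin n × ℕ)

/-- The measured (non-output) qubits. -/
def measQ {n : ℕ} (cc : Circuit n) : Finset (Fin n × ℕ) := vertsUsed cc \ outQ cc

instance {W : Type} [DecidableEq W] : Std.Commutative (α := Finset W) symmDiff :=
  ⟨symmDiff_comm⟩
instance {W : Type} [DecidableEq W] : Std.Associative (α := Finset W) symmDiff :=
  ⟨symmDiff_assoc⟩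

/-- Mod-2 sum (symmetric difference) of the signal domains `σ u`, `u ∈ s`. -/
noncomputable def sigFold {W : Type} [DecidableEq W] (σ : W → Finset W) (s : Finset W) :
    Finset W :=
  Finset.fold symmDiff ∅ σ s

/-- The `X`-dependency domain of the command at qubit `q` of the translated pattern
(the flow preimage of `q`). -/
noncomputable def cXdom {n : ℕ} (cc : Circuit n) (q : Fin n × ℕ) : Finset (Fin n × ℕ) :=
  (measQ cc).filter fun u => wireSucc u = q

/-- The `Z`-dependency domain of the command at qubit `q` of the translated pattern. -/
noncomputable def cZdom {n : ℕ} (cc : Circuit n) (q : Fin n × ℕ) : Finset (Fin n × ℕ) :=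
  (measQ cc).filter fun u => u ≠ q ∧ (circGraph cc).Adj (wireSucc u) q

/-- Signal-shift map of the translated pattern: `σ q` is the domain of the effective
(signal-shifted) signal replacing the raw outcome of qubit `q`. -/
def cIsShiftMap {n : ℕ} (cc : Circuit n) (σ : Fin n × ℕ → Finset (Fin n × ℕ)) : Prop :=
  ∀ q, σ q = symmDiff {q} (sigFold σ (cZdom cc q))

/-- Arcs of the execution digraph of the translated pattern after standardization and
signal shifting. -/
def cShiftedDep {n : ℕ} (cc : Circuit n) (σ : Fin n × ℕ → Finset (Fin n × ℕ))
    (u v : Fin n × ℕ) : Prop :=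
  u ∈ sigFold σ (cXdom cc v) ∨ (v ∈ outQ cc ∧ u ∈ sigFold σ (cZdom cc v))

/-- The number of vertices on a longest directed path of the digraph with arc
relation `r`. -/
noncomputable def relDepth {W : Type} (r : W → W → Prop) : ℕ :=
  sSup {m | ∃ l : List W, l.Nodup ∧ l.Chain' r ∧ l.length = m}

/-- The measurement angle at qubit `(i, k)`: the negation of the angle of the
`(k+1)`-st `J` gate on wire `i` (each `J(α)` gate is translated to the pattern
`X₂^{s₁} M₁^{−α} E₁₂`). -/
noncomputable def cAngle {n : ℕ} (cc : Circuit n) (q : Fin n × ℕ) : ℝ :=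
  -(((cc.filterMap fun g => match g with
      | .J a j => if j = q.1 then some a else none
      | _ => none)[q.2]?).getD 0)

/-- Commands of the measurement pattern obtained from a circuit: entanglements,
dependent measurements and (combined) dependent corrections; signals are represented
by their domains. -/
inductive Cmd (W : Type) where
  | ent (i j : W)
  | meas (i : W) (a : ℝ) (s t : Finset W)
  | corr (i : W) (sx sz : Finset W)

namespace Cmd

def isMeas {W : Type} : Cmd W → Bool
  | .meas _ _ _ _ => true
  | _ => false

def isCorr {W : Type} : Cmd W → Bool
  | .corr _ _ _ => true
  | _ => false

end Cmd

/-- The measurement commands of the pattern of `cc` (textual order: leftmost executed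
last, so the list of measurements is reversed with respect to the circuit order,
which linearizes the flow order). Each `J(α)` gate contributes the measurement
`M^{−α}` of the qubit it consumes, with the dependency domains given by the Flow
Theorem. -/
noncomputable def measList {n : ℕ} (cc : Circuit n) : List (Cmd (Fin n × ℕ)) :=
  ((List.range cc.length).filterMap fun p =>
    match cc[p]? with
    | some (Gate.J _ i) => some (Cmd.meas (i, stAt cc p i) (cAngle cc (i, stAt cc p i))
        (cXdom cc (i, stAt cc p i)) (cZdom cc (i, stAt cc p i)))
    | _ => none).reverse

/-- The final corrections on the output qubits. -/
noncomputable def corrList {n : ℕ} (cc : Circuit n) : List (Cmd (Fin n × ℕ)) :=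
  (List.finRange n).map fun i =>
    Cmd.corr (i, stageAfter cc i)
      (cXdom cc (i, stageAfter cc i)) (cZdom cc (i, stageAfter cc i))

/-- The entanglement commands: one per gate of the circuit. -/
noncomputable def entList {n : ℕ} (cc : Circuit n) : List (Cmd (Fin n × ℕ)) :=
  ((List.range cc.length).filterMap fun p =>
    match cc[p]? with
    | some (Gate.cz i j) => some (Cmd.ent (i, stAt cc p i) (j, stAt cc p j))
    | some (Gate.J _ i) => some (Cmd.ent (i, stAt cc p i) (i, stAt cc p i + 1))
    | none => none).reverse

/-- The standard pattern corresponding to the circuit `cc` (corrections, then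
measurements, then entanglements; executed right-to-left). -/
noncomputable def transCmds {n : ℕ} (cc : Circuit n) : List (Cmd (Fin n × ℕ)) :=
  corrList cc ++ measList cc ++ entList cc

/-- A geometry: an undirected graph together with input and output sets. -/
structure Geometry (V : Type) where
  G : SimpleGraph V
  I : Finset V
  O : Finset V

/-- A flow `(f, ≼)` for a geometry `(G, I, O)`: a map `f : Oᶜ → Iᶜ` together with a
partial order `≼` on the vertices such that for every non-output `x`: `x ∼ f x`,
`x ≼ f x`, and `x ≼ y` for every neighbour `y` of `f x`. -/
structure Flow {V : Type} (Γ : Geometry V) where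
  f : V → V
  le : V → V → Prop
  le_refl : ∀ x, le x x
  le_trans : ∀ x y z, le x y → le y z → le x z
  le_antisymm : ∀ x y, le x y → le y x → x = y
  f_adj : ∀ x, x ∉ Γ.O → Γ.G.Adj x (f x)
  f_not_input : ∀ x, x ∉ Γ.O → f x ∉ Γ.I
  le_f : ∀ x, x ∉ Γ.O → le x (f x)
  le_nbr : ∀ x y, x ∉ Γ.O → Γ.G.Adj (f x) y → le x y

/-- The entanglement graph determined by the entanglement commands of the translated
pattern. -/
noncomputable def patGraph {n : ℕ} (cc : Circuit n) : SimpleGraph (Fin n × ℕ) :=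
  SimpleGraph.fromRel fun u v => Cmd.ent u v ∈ transCmds cc

section Aux

variable {n : ℕ}

lemma stageAfter_append (l₁ l₂ : Circuit n) (i : Fin n) :
    stageAfter (l₁ ++ l₂) i = stageAfter l₁ i + stageAfter l₂ i := by
  simp [stageAfter, List.filter_append]

lemma stAt_succ (cc : Circuit n) (p : ℕ) (i : Fin n) :
    stAt cc (p + 1) i = stAt cc p i + stageAfter cc[p]?.toList i := by
  unfold stAt
  rw [List.take_succ, stageAfter_append]

lemma stAt_zero (cc : Circuit n) (i : Fin n) : stAt cc 0 i = 0 := rfl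

lemma stAt_succ_J {cc : Circuit n} {p : ℕ} {α : ℝ} {i : Fin n}
    (h : cc[p]? = some (.J α i)) :
    stAt cc (p + 1) i = stAt cc p i + 1 := by
  rw [stAt_succ, h]
  simp [stageAfter, List.filter]

lemma stAt_succ_le (cc : Circuit n) (p : ℕ) (i : Fin n) :
    stAt cc (p + 1) i ≤ stAt cc p i + 1 := by
  rw [stAt_succ]
  have h := List.length_filter_le
    (fun g : Gate n => match g with | .J _ j => j == i | _ => false) cc[p]?.toList
  have h2 : cc[p]?.toList.length ≤ 1 := by cases cc[p]? <;> simp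
  simp only [stageAfter]
  omega

lemma stAt_mono (cc : Circuit n) {p q : ℕ} (h : p ≤ q) (i : Fin n) :
    stAt cc p i ≤ stAt cc q i := by
  induction q with
  | zero => simp [Nat.le_zero.mp h]
  | succ q ih =>
    rcases Nat.lt_or_ge p (q + 1) with h' | h'
    · have := ih (by omega)
      rw [stAt_succ]
      omega
    · have : p = q + 1 := by omega
      simp [this]

lemma stAt_len (cc : Circuit n) (i : Fin n) : stAt cc cc.length i = stageAfter cc i := by
  simp [stAt]

lemma stage_le_len (cc : Circuit n) (i : Fin n) : stageAfter cc i ≤ cc.length :=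
  List.length_filter_le _ _

lemma gate_of_lt {cc : Circuit n} {p : ℕ} {i : Fin n}
    (h : stAt cc p i < stAt cc (p + 1) i) :
    ∃ α, cc[p]? = some (.J α i) := by
  rw [stAt_succ] at h
  cases hg : cc[p]? with
  | none => rw [hg] at h; simp [stageAfter] at h
  | some g =>
    rw [hg] at h
    cases g with
    | cz a b => simp [stageAfter, List.filter] at h
    | J α j =>
      by_cases hj : j = i
      · exact ⟨α, by rw [hj]⟩
      · exfalso
        have hb : (j == i) = false := beq_eq_false_iff_ne.mpr hj
        simp [stageAfter, List.filter, hb] at h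

/-- Position of the `(k+1)`-st `J` gate on wire `q.1` (or the circuit length). -/
noncomputable def rho (cc : Circuit n) (q : Fin n × ℕ) : ℕ :=
  if q.2 < stageAfter cc q.1 then sInf {p | q.2 < stAt cc (p + 1) q.1} else cc.length

lemma mem_S {cc : Circuit n} {i : Fin n} {k : ℕ} (hk : k < stageAfter cc i) :
    cc.length - 1 ∈ {p | k < stAt cc (p + 1) i} := by
  have h1 : 1 ≤ cc.length := by have := stage_le_len cc i; omega
  simp only [Set.mem_setOf_eq, Nat.sub_add_cancel h1, stAt_len]
  exact hk

lemma rho_lt_len {cc : Circuit n} {i : Fin n} {k : ℕ} (hk : k < stageAfter cc i) :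
    rho cc (i, k) < cc.length := by
  have h1 : 1 ≤ cc.length := by have := stage_le_len cc i; omega
  have h2 := Nat.sInf_le (mem_S hk)
  simp only [rho]
  rw [if_pos hk]
  omega

lemma rho_lt_of_lt_stAt {cc : Circuit n} {i : Fin n} {k p : ℕ}
    (hk : k < stageAfter cc i) (h : k < stAt cc p i) :
    rho cc (i, k) < p := by
  have hp : 1 ≤ p := by
    rcases Nat.eq_zero_or_pos p with h0 | h0
    · rw [h0, stAt_zero] at h; omega
    · exact h0
  have hmem : p - 1 ∈ {p' | k < stAt cc (p' + 1) i} := by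
    simp only [Set.mem_setOf_eq, Nat.sub_add_cancel hp]
    exact h
  have := Nat.sInf_le hmem
  simp only [rho]
  rw [if_pos hk]
  omega

lemma rho_spec {cc : Circuit n} {i : Fin n} {k : ℕ} (hk : k < stageAfter cc i) :
    stAt cc (rho cc (i, k)) i = k ∧ ∃ α, cc[rho cc (i, k)]? = some (.J α i) := by
  have hpdef : rho cc (i, k) = sInf {p | k < stAt cc (p + 1) i} := by
    simp only [rho]; rw [if_pos hk]
  set p := rho cc (i, k) with hp
  have hmem : k < stAt cc (p + 1) i := by
    have h := Nat.sInf_mem (⟨_, mem_S hk⟩ : {p | k < stAt cc (p + 1) i}.Nonempty)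
    rw [← hpdef] at h
    exact h
  have hub : stAt cc p i ≤ k := by
    rcases Nat.eq_zero_or_pos p with h0 | h0
    · rw [h0, stAt_zero]; omega
    · have hnot : p - 1 ∉ {p' | k < stAt cc (p' + 1) i} := by
        intro hm
        have := Nat.sInf_le hm
        omega
      simp only [Set.mem_setOf_eq, Nat.sub_add_cancel h0, not_lt] at hnot
      exact hnot
  have hle := stAt_succ_le cc p i
  have h1 : stAt cc p i = k := by omega
  exact ⟨h1, gate_of_lt (by omega)⟩

lemma rho_succ_lt {cc : Circuit n} {i : Fin n} {k : ℕ} (hk : k < stageAfter cc i) :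
    rho cc (i, k) < rho cc (i, k + 1) := by
  by_cases h2 : k + 1 < stageAfter cc i
  · exact rho_lt_of_lt_stAt hk (by rw [(rho_spec h2).1]; omega)
  · have : rho cc (i, k + 1) = cc.length := by
      simp only [rho]; rw [if_neg (by simpa using h2)]
    rw [this]
    exact rho_lt_len hk

lemma rho_ge {cc : Circuit n} {i : Fin n} {m p : ℕ} (hp : p ≤ cc.length)
    (h : stAt cc p i = m) :
    p ≤ rho cc (i, m) := by
  simp only [rho]
  split
  · next hm =>
    refine le_csInf ⟨_, mem_S hm⟩ ?_
    intro b hb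
    by_contra hlt
    push_neg at hlt
    have hmono := stAt_mono cc (show b + 1 ≤ p by omega) i
    simp only [Set.mem_setOf_eq] at hb
    omega
  · exact hp

lemma key_edge {cc : Circuit n} {i : Fin n} {k : ℕ} (hk : k < stageAfter cc i)
    {y : Fin n × ℕ} {p : ℕ} (hp : p < cc.length)
    (h : gateEdge cc p (i, k + 1) y ∨ gateEdge cc p y (i, k + 1)) :
    y = (i, k) ∨ rho cc (i, k) < rho cc y := by
  have step2 : rho cc (i, k) < rho cc (i, k + 2) := by
    by_cases h2 : k + 1 < stageAfter cc i
    · exact lt_trans (rho_succ_lt hk) (rho_succ_lt h2)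
    · have : rho cc (i, k + 2) = cc.length := by
        simp only [rho]; rw [if_neg (by simp; omega)]
      rw [this]; exact rho_lt_len hk
  rcases h with ⟨g, hg, hm⟩ | ⟨g, hg, hm⟩
  · cases g with
    | cz a b =>
      simp only at hm
      obtain ⟨h1, h2⟩ := hm
      obtain ⟨ha, hst⟩ := Prod.mk.injEq .. ▸ h1
      right
      have hst' : k < stAt cc p i := by rw [ha]; omega
      have hlt := rho_lt_of_lt_stAt hk hst'
      have hge : p ≤ rho cc y := by rw [h2]; exact rho_ge hp.le rfl
      omega
    | J α a =>
      simp only at hm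
      obtain ⟨h1, h2⟩ := hm
      obtain ⟨ha, hst⟩ := Prod.mk.injEq .. ▸ h1
      subst ha
      right
      have : y = (i, k + 2) := by rw [h2]; rw [← hst]
      rw [this]
      exact step2
  · cases g with
    | cz a b =>
      simp only at hm
      obtain ⟨h1, h2⟩ := hm
      obtain ⟨hb, hst⟩ := Prod.mk.injEq .. ▸ h2
      right
      have hst' : k < stAt cc p i := by rw [hb]; omega
      have hlt := rho_lt_of_lt_stAt hk hst'
      have hge : p ≤ rho cc y := by rw [h1]; exact rho_ge hp.le rfl
      omega
    | J α a =>
      simp only at hm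
      obtain ⟨h1, h2⟩ := hm
      obtain ⟨hb, hst⟩ := Prod.mk.injEq .. ▸ h2
      subst hb
      left
      rw [h1]
      have : stAt cc p i = k := by omega
      rw [this]

lemma mem_vertsUsed_iff {cc : Circuit n} {q : Fin n × ℕ} :
    q ∈ vertsUsed cc ↔ q.2 ≤ stageAfter cc q.1 := by
  simp only [vertsUsed, Finset.mem_filter, Finset.mem_product, Finset.mem_range,
    Finset.mem_univ, true_and]
  constructor
  · exact fun h => h.2
  · intro h
    exact ⟨by have := stage_le_len cc q.1; omega, h⟩

lemma mem_outQ_iff {cc : Circuit n} {q : Fin n × ℕ} :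
    q ∈ outQ cc ↔ q.2 = stageAfter cc q.1 := by
  simp only [outQ, Finset.mem_image, Finset.mem_univ, true_and]
  constructor
  · rintro ⟨i, rfl⟩; rfl
  · intro h; exact ⟨q.1, Prod.ext rfl h.symm⟩

lemma mem_inQ_iff {q : Fin n × ℕ} : q ∈ inQ n ↔ q.2 = 0 := by
  simp only [inQ, Finset.mem_image, Finset.mem_univ, true_and]
  constructor
  · rintro ⟨i, rfl⟩; rfl
  · intro h; exact ⟨q.1, Prod.ext rfl h.symm⟩

lemma wireSucc_mem {cc : Circuit n} {q : Fin n × ℕ} (hq : q ∈ vertsUsed cc)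
    (ho : q ∉ outQ cc) : wireSucc q ∈ vertsUsed cc := by
  rw [mem_vertsUsed_iff] at hq ⊢
  rw [mem_outQ_iff] at ho
  simp only [wireSucc]
  omega

lemma adj_wireSucc {cc : Circuit n} {i : Fin n} {k : ℕ} (hk : k < stageAfter cc i) :
    (circGraph cc).Adj (i, k) (i, k + 1) := by
  obtain ⟨hst, α, hg⟩ := rho_spec hk
  refine (SimpleGraph.fromRel_adj ..).mpr ⟨by simp, Or.inl ⟨rho cc (i, k), rho_lt_len hk,
    ⟨.J α i, hg, ?_⟩⟩⟩
  exact ⟨by rw [hst], by rw [hst]⟩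

lemma ent_iff {cc : Circuit n} (u v : Fin n × ℕ) :
    (Cmd.ent u v ∈ transCmds cc) ↔ ∃ p, p < cc.length ∧ gateEdge cc p u v := by
  constructor
  · intro h
    simp only [transCmds, List.mem_append] at h
    rcases h with (h | h) | h
    · exfalso
      simp [corrList] at h
    · exfalso
      simp only [measList, List.mem_reverse, List.mem_filterMap, List.mem_range] at h
      obtain ⟨p, hp, hm⟩ := h
      split at hm <;> simp_all
    · simp only [entList, List.mem_reverse, List.mem_filterMap, List.mem_range] at h
      obtain ⟨p, hp, hm⟩ := h
      split at hm
      · next i j heq =>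
        refine ⟨p, hp, .cz i j, heq, ?_⟩
        simp only [Option.some.injEq, Cmd.ent.injEq] at hm
        exact ⟨hm.1.symm, hm.2.symm⟩
      · next α i heq =>
        refine ⟨p, hp, .J α i, heq, ?_⟩
        simp only [Option.some.injEq, Cmd.ent.injEq] at hm
        exact ⟨hm.1.symm, hm.2.symm⟩
      · simp at hm
  · rintro ⟨p, hp, g, hg, hm⟩
    simp only [transCmds, List.mem_append]
    right
    simp only [entList, List.mem_reverse, List.mem_filterMap, List.mem_range]
    refine ⟨p, hp, ?_⟩
    cases g with
    | cz a b =>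
      simp only at hm
      rw [hg]
      simp [hm.1, hm.2]
    | J α a =>
      simp only at hm
      rw [hg]
      simp [hm.1, hm.2]

lemma graphs_eq (cc : Circuit n) : circGraph cc = patGraph cc := by
  ext u v
  simp only [circGraph, patGraph, SimpleGraph.fromRel_adj]
  rw [← ent_iff u v, ← ent_iff v u]

end Aux

/-- The labelled entanglement graph `G_C` equals the entanglement
graph of the translated pattern, and the wire paths (the successor map `wireSucc` on
each wire) define a flow of the geometry `(G_C, I, O)` (restricted to the qubits of
the pattern). -/
theorem labelled_graph_is_pattern_graph_and_flow {n : ℕ} (cc : Circuit n) :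
    circGraph cc = patGraph cc ∧
    ∃ F : Flow (⟨(circGraph cc).comap
          (fun q : {q : Fin n × ℕ // q ∈ vertsUsed cc} => (q : Fin n × ℕ)),
        (vertsUsed cc).attach.filter (fun q => (q : Fin n × ℕ) ∈ inQ n),
        (vertsUsed cc).attach.filter (fun q => (q : Fin n × ℕ) ∈ outQ cc)⟩ : Geometry _),
      ∀ q : {q : Fin n × ℕ // q ∈ vertsUsed cc}, (q : Fin n × ℕ) ∉ outQ cc →
        ((F.f q) : Fin n × ℕ) = wireSucc (q : Fin n × ℕ) := by
  classical
  refine ⟨graphs_eq cc, ?_⟩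
  have hO : ∀ x : {q : Fin n × ℕ // q ∈ vertsUsed cc},
      x ∈ (vertsUsed cc).attach.filter
          (fun q : {q : Fin n × ℕ // q ∈ vertsUsed cc} => (q : Fin n × ℕ) ∈ outQ cc) ↔
        (x : Fin n × ℕ) ∈ outQ cc := by
    intro x; simp [Finset.mem_filter]
  have hI : ∀ x : {q : Fin n × ℕ // q ∈ vertsUsed cc},
      x ∈ (vertsUsed cc).attach.filter
          (fun q : {q : Fin n × ℕ // q ∈ vertsUsed cc} => (q : Fin n × ℕ) ∈ inQ n) ↔
        (x : Fin n × ℕ) ∈ inQ n := by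
    intro x; simp [Finset.mem_filter]
  have hk : ∀ x : {q : Fin n × ℕ // q ∈ vertsUsed cc}, (x : Fin n × ℕ) ∉ outQ cc →
      (x : Fin n × ℕ).2 < stageAfter cc (x : Fin n × ℕ).1 := by
    intro x hx
    have h1 := mem_vertsUsed_iff.mp x.2
    have h2 := mem_outQ_iff.not.mp hx
    omega
  refine ⟨{ f := fun q => if h : (q : Fin n × ℕ) ∈ outQ cc then q
              else ⟨wireSucc q, wireSucc_mem q.2 h⟩,
            le := fun x y => x = y ∨ rho cc x.1 < rho cc y.1,
            le_refl := fun x => Or.inl rfl,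
            le_trans := ?_, le_antisymm := ?_, f_adj := ?_, f_not_input := ?_,
            le_f := ?_, le_nbr := ?_ }, ?_⟩
  · rintro x y z (rfl | h1) (rfl | h2)
    · exact Or.inl rfl
    · exact Or.inr h2
    · exact Or.inr h1
    · exact Or.inr (lt_trans h1 h2)
  · rintro x y (rfl | h1) (h | h2)
    · rfl
    · rfl
    · exact h.symm
    · omega
  · intro x hx
    rw [hO] at hx
    simp only [dif_neg hx]
    obtain ⟨⟨i, k⟩, hmem⟩ := x
    exact adj_wireSucc (hk ⟨(i, k), hmem⟩ hx)
  · intro x hx hin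
    rw [hO] at hx
    simp only [dif_neg hx] at hin
    rw [hI] at hin
    rw [mem_inQ_iff] at hin
    simp [wireSucc] at hin
  · intro x hx
    rw [hO] at hx
    simp only [dif_neg hx]
    right
    obtain ⟨⟨i, k⟩, hmem⟩ := x
    exact rho_succ_lt (hk ⟨(i, k), hmem⟩ hx)
  · intro x y hx hadj
    rw [hO] at hx
    simp only [dif_neg hx] at hadj
    obtain ⟨⟨i, k⟩, hmem⟩ := x
    have hk' : k < stageAfter cc i := hk ⟨(i, k), hmem⟩ hx
    have hadj' : (circGraph cc).Adj (i, k + 1) (y : Fin n × ℕ) := hadj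
    rw [circGraph, SimpleGraph.fromRel_adj] at hadj'
    obtain ⟨hne, hrel⟩ := hadj'
    have : (y : Fin n × ℕ) = (i, k) ∨ rho cc (i, k) < rho cc (y : Fin n × ℕ) := by
      rcases hrel with ⟨p, hp, hge⟩ | ⟨p, hp, hge⟩
      · exact key_edge hk' hp (Or.inl hge)
      · exact key_edge hk' hp (Or.inr hge)
    rcases this with h | h
    · exact Or.inl (Subtype.ext h.symm)
    · exact Or.inr h
  · intro q hq
    simp only [dif_neg hq]

end MBQC
end

section
/- Let n ≥ 2 and let U_p be the parity unitary on n qubits, acting on computational basis states by U_p|x₁, x₂, …, xₙ⟩ = |x₁, …, x_{n−1}, x₁ ⊕ x₂ ⊕ ⋯ ⊕ xₙ⟩. If U_p = L_d · L_{d−1} ⋯ L₁ where each layer L_k is a unitary on (ℂ²)^{⊗n} that factors as a tensor product of gates each acting on at most 2 qubits (i.e. for each k there is a partition of {1,…,n} into blocks of size at most 2 such that L_k is a product of unitaries each supported on a single block), then 2^d ≥ n, i.e. the circuit depth d is at least log₂ n. -/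
/-!
Heisenberg picture. Conjugating an operator supported on a set `S` of qubits by one layer gives
an operator supported on the union of the blocks meeting `S`, of size at most `2 |S|`: a gate on a
block disjoint from the current support commutes with the operator and cancels against its
adjoint. Hence conjugating the projector onto `x_n = 1` by a depth-`d` circuit yields an operator
supported on at most `2 ^ d` qubits. Conjugating it by the parity unitary instead yields the
diagonal operator reading off `x₁ ⊕ ⋯ ⊕ xₙ`, which flips when any single bit flips and so is
supported on no proper subset of the qubits. Therefore `n ≤ 2 ^ d`.
-/

namespace ParityDepth

/-- The mod-2 sum of the bits of `x`. -/
def xorAll {n : ℕ} (x : Fin n → Bool) : Bool :=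
  decide ((Finset.univ.filter fun i => x i = true).card % 2 = 1)

/-- The parity map on basis states: it keeps the first `n−1` bits and writes the
parity of all the bits in the last position. -/
def parityMap {n : ℕ} (x : Fin n → Bool) : Fin n → Bool :=
  fun j => if (j : ℕ) = n - 1 then xorAll x else x j

/-- The parity unitary `U_p` as a matrix on `(ℂ²)^{⊗n}`, indexed by the computational
basis: `U_p |x⟩ = |parityMap x⟩`. -/
noncomputable def parityMat (n : ℕ) :
    Matrix (Fin n → Bool) (Fin n → Bool) ℂ :=
  fun y x => if y = parityMap x then 1 else 0

/-- A matrix on `(ℂ²)^{⊗n}` is supported on the set `S` of qubits if its entries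
vanish unless row and column indices agree outside `S`, and otherwise depend only on
the restrictions to `S`. -/
def Supported {n : ℕ} (M : Matrix (Fin n → Bool) (Fin n → Bool) ℂ)
    (S : Finset (Fin n)) : Prop :=
  ∃ m : ({ i // i ∈ S } → Bool) → ({ i // i ∈ S } → Bool) → ℂ,
    ∀ x y, M x y =
      if ∀ i ∉ S, x i = y i then m (fun i => x i) (fun i => y i) else 0

/-- A layer: a unitary that factors as a product of unitaries supported on the blocks
of a partition of the qubits into blocks of size at most `2` (such factors commute, so
the product may be taken in any fixed order). -/
def IsLayer {n : ℕ} (L : Matrix (Fin n → Bool) (Fin n → Bool) ℂ) : Prop :=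
  ∃ (r : ℕ) (B : Fin r → Finset (Fin n))
    (g : Fin r → Matrix (Fin n → Bool) (Fin n → Bool) ℂ),
    (∀ a b, a ≠ b → Disjoint (B a) (B b)) ∧
    (∀ i : Fin n, ∃ a, i ∈ B a) ∧
    (∀ a, (B a).card ≤ 2) ∧
    (∀ a, Supported (g a) (B a) ∧ (g a).conjTranspose * g a = 1 ∧ g a * (g a).conjTranspose = 1) ∧
    L = (List.ofFn g).prod

open Matrix Finset

variable {n : ℕ} {S T : Finset (Fin n)} {A B M : Matrix (Fin n → Bool) (Fin n → Bool) ℂ}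

def glue (S : Finset (Fin n)) (w : S → Bool) (x : Fin n → Bool) : Fin n → Bool :=
  fun i => if h : i ∈ S then w ⟨i, h⟩ else x i

theorem glue_of_mem (w : S → Bool) (x : Fin n → Bool) {i : Fin n} (hi : i ∈ S) :
    glue S w x i = w ⟨i, hi⟩ :=
  dif_pos hi

theorem restrict_glue (w : S → Bool) (x : Fin n → Bool) :
    (fun i : S => glue S w x i) = w :=
  funext fun i => glue_of_mem w x i.2

theorem glue_of_notMem (w : S → Bool) (x : Fin n → Bool) {i : Fin n} (hi : i ∉ S) :
    glue S w x i = x i :=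
  dif_neg hi

theorem glue_restrict {x z : Fin n → Bool} (h : ∀ i ∉ S, x i = z i) :
    glue S (fun i => z i) x = z :=
  funext fun i =>
    if hi : i ∈ S then glue_of_mem _ x hi else (glue_of_notMem _ x hi).trans (h i hi)

theorem Supported.apply_eq_zero (h : Supported M S) {x y : Fin n → Bool}
    (hxy : ¬ ∀ i ∉ S, x i = y i) : M x y = 0 := by
  obtain ⟨m, hm⟩ := h
  rw [hm, if_neg hxy]

theorem Supported.apply_eq_apply (h : Supported M S) {x y x' y' : Fin n → Bool}
    (hx : ∀ i ∈ S, x i = x' i) (hy : ∀ i ∈ S, y i = y' i)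
    (hxy : ∀ i ∉ S, x i = y i) (hxy' : ∀ i ∉ S, x' i = y' i) : M x y = M x' y' := by
  obtain ⟨m, hm⟩ := h
  rw [hm, hm, if_pos hxy, if_pos hxy']
  congr 1 <;> funext i
  exacts [hx i i.2, hy i i.2]

theorem Supported.mono (h : Supported M S) (hST : S ⊆ T) : Supported M T := by
  classical
  obtain ⟨m, hm⟩ := h
  refine ⟨fun u v => if ∀ i : T, i.1 ∉ S → u i = v i then
      m (fun j => u ⟨j, hST j.2⟩) (fun j => v ⟨j, hST j.2⟩) else 0, fun x y => ?_⟩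
  rw [hm]
  beta_reduce
  by_cases hS : ∀ i ∉ S, x i = y i
  · have hT : ∀ i ∉ T, x i = y i := fun i hi => hS i (fun h => hi (hST h))
    rw [if_pos hS, if_pos hT, if_pos fun (i : T) => hS i]
  · have : ¬ ((∀ i ∉ T, x i = y i) ∧ ∀ i : T, i.1 ∉ S → x i = y i) := fun h =>
      hS fun i hi => if hiT : i ∈ T then h.2 ⟨i, hiT⟩ hi else h.1 i hiT
    rw [if_neg hS, ← ite_and, if_neg this]

theorem Supported.conjTranspose (h : Supported M S) : Supported Mᴴ S := by
  obtain ⟨m, hm⟩ := h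
  refine ⟨fun u v => star (m v u), fun x y => ?_⟩
  simp only [conjTranspose_apply, hm, eq_comm (a := x _)]
  split_ifs <;> simp

theorem Supported.mul (hA : Supported A S) (hB : Supported B S) : Supported (A * B) S := by
  obtain ⟨a, ha⟩ := id hA
  obtain ⟨b, hb⟩ := id hB
  refine ⟨fun u v => ∑ w, a u w * b w v, fun x y => ?_⟩
  rw [mul_apply]
  by_cases hxy : ∀ i ∉ S, x i = y i
  · rw [if_pos hxy]
    symm
    refine Fintype.sum_of_injective (glue S · x) (fun w w' h => ?_) _ _ (fun z hz => ?_)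
      (fun w => ?_)
    · simpa only [restrict_glue] using congrArg (fun z (i : S) => z i) h
    · exact mul_eq_zero_of_left (hA.apply_eq_zero fun hxz => hz ⟨_, glue_restrict hxz⟩) _
    · have hx : ∀ i ∉ S, x i = glue S w x i := fun i hi => (glue_of_notMem w x hi).symm
      rw [ha, hb, if_pos hx, if_pos fun i hi => (hx i hi).symm.trans (hxy i hi),
        restrict_glue]
  · rw [if_neg hxy]
    refine sum_eq_zero fun z _ => ?_
    by_cases hxz : ∀ i ∉ S, x i = z i
    · exact mul_eq_zero_of_right _
        (hB.apply_eq_zero fun hzy => hxy fun i hi => (hxz i hi).trans (hzy i hi))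
    · exact mul_eq_zero_of_left (hA.apply_eq_zero hxz) _

theorem Supported.mul_apply_of_disjoint (hA : Supported A S) (hB : Supported B T)
    (hST : Disjoint S T) (x y : Fin n → Bool) :
    (A * B) x y = if ∀ i ∉ S, i ∉ T → x i = y i then
      A x (S.piecewise y x) * B x (T.piecewise y x) else 0 := by
  classical
  have hS : ∀ {i}, i ∈ S → i ∉ T := fun hi => disjoint_left.mp hST hi
  rw [mul_apply, sum_eq_single (S.piecewise y x)]
  · split_ifs with hxy
    · congr 1
      refine hB.apply_eq_apply (fun i hi => ?_) (fun i hi => ?_) (fun i hi => ?_) (fun i hi => ?_)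
      · exact piecewise_eq_of_notMem _ _ _ (disjoint_right.mp hST hi)
      · exact (piecewise_eq_of_mem _ _ _ hi).symm
      · by_cases hiS : i ∈ S
        · exact piecewise_eq_of_mem _ _ _ hiS
        · rw [piecewise_eq_of_notMem _ _ _ hiS, hxy i hiS hi]
      · exact (piecewise_eq_of_notMem _ _ _ hi).symm
    · refine mul_eq_zero_of_right _ (hB.apply_eq_zero fun h => hxy fun i hiS hiT => ?_)
      rw [← h i hiT, piecewise_eq_of_notMem _ _ _ hiS]
  · intro z _ hz
    by_cases hxz : ∀ i ∉ S, x i = z i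
    · refine mul_eq_zero_of_right _ (hB.apply_eq_zero fun hzy => hz (funext fun i => ?_))
      by_cases hiS : i ∈ S
      · rw [piecewise_eq_of_mem _ _ _ hiS, hzy i (hS hiS)]
      · rw [piecewise_eq_of_notMem _ _ _ hiS, hxz i hiS]
    · exact mul_eq_zero_of_left (hA.apply_eq_zero hxz) _
  · exact fun h => absurd (mem_univ _) h

theorem Supported.commute_of_disjoint (hA : Supported A S) (hB : Supported B T)
    (hST : Disjoint S T) : Commute A B := by
  ext x y
  rw [hA.mul_apply_of_disjoint hB hST, hB.mul_apply_of_disjoint hA hST.symm, mul_comm]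
  simp only [forall_comm (α := _ ∉ S)]

theorem supported_diagonal_iff {f : (Fin n → Bool) → ℂ} :
    Supported (diagonal f) S ↔ ∀ x y : Fin n → Bool, (∀ i ∈ S, x i = y i) → f x = f y := by
  classical
  constructor
  · intro h x y hxy
    simpa using h.apply_eq_apply (x := x) (y := x) hxy hxy (fun _ _ => rfl) fun _ _ => rfl
  · intro h
    refine ⟨fun u v => if u = v then f (glue S u fun _ => false) else 0, fun x y => ?_⟩
    beta_reduce
    by_cases hxy : x = y
    · subst hxy
      rw [diagonal_apply_eq, if_pos fun _ _ => rfl, if_pos rfl]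
      exact h _ _ fun i hi => (glue_of_mem (fun i : S => x i) _ hi).symm
    · rw [diagonal_apply_ne _ hxy]
      split_ifs with hoff hS
      · refine absurd ?_ hxy
        calc x = glue S (fun i => x i) x := (glue_restrict fun _ _ => rfl).symm
          _ = glue S (fun i => y i) x := by rw [hS]
          _ = y := glue_restrict hoff
      all_goals rfl

theorem conjTranspose_mul_conj (g P A : Matrix (Fin n → Bool) (Fin n → Bool) ℂ) :
    (g * P)ᴴ * A * (g * P) = Pᴴ * (gᴴ * A * g) * P := by
  simp only [conjTranspose_mul, Matrix.mul_assoc]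

theorem Supported.conj_list_prod {C : Finset (Fin n)}
    (gs : List (Matrix (Fin n → Bool) (Fin n → Bool) ℂ))
    (hgs : ∀ g ∈ gs, gᴴ * g = 1 ∧ ∃ S, Supported g S ∧ (S ⊆ C ∨ Disjoint S C))
    (hA : Supported A C) : Supported ((gs.prod)ᴴ * A * gs.prod) C := by
  induction gs generalizing A with
  | nil => simpa using hA
  | cons g gs ih =>
    rw [List.prod_cons, conjTranspose_mul_conj]
    refine ih (fun g' hg' => hgs g' (List.mem_cons_of_mem _ hg')) ?_
    obtain ⟨hu, S, hgS, hSC | hSC⟩ := hgs g List.mem_cons_self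
    · exact ((hgS.mono hSC).conjTranspose.mul hA).mul (hgS.mono hSC)
    · rwa [Matrix.mul_assoc, ← (hgS.commute_of_disjoint hA hSC).eq, ← Matrix.mul_assoc, hu,
        Matrix.one_mul]

theorem IsLayer.exists_conj_supported {L : Matrix (Fin n → Bool) (Fin n → Bool) ℂ}
    (hL : IsLayer L) (hA : Supported A S) :
    ∃ T : Finset (Fin n), T.card ≤ 2 * S.card ∧ Supported (Lᴴ * A * L) T := by
  classical
  obtain ⟨r, B, g, hdisj, hcover, hcard, hg, rfl⟩ := hL
  choose blk hblk using hcover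
  -- the union of the blocks meeting `S`; every block lies inside it or is disjoint from it
  refine ⟨S.biUnion (B ∘ blk), ?_, ?_⟩
  · calc (S.biUnion (B ∘ blk)).card ≤ ∑ i ∈ S, (B (blk i)).card := card_biUnion_le
      _ ≤ ∑ _i ∈ S, 2 := sum_le_sum fun i _ => hcard _
      _ = 2 * S.card := by rw [sum_const, smul_eq_mul, mul_comm]
  · refine (hA.mono fun i hi => mem_biUnion.2 ⟨i, hi, hblk i⟩).conj_list_prod _ ?_
    simp only [List.mem_ofFn, forall_exists_index, forall_apply_eq_imp_iff]
    refine fun a => ⟨(hg a).2.1, B a, (hg a).1, or_iff_not_imp_right.2 fun hmeet => ?_⟩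
    obtain ⟨j, hja, hjC⟩ := not_disjoint_iff.1 hmeet
    obtain ⟨i, hiS, hji⟩ := mem_biUnion.1 hjC
    obtain rfl : a = blk i := by_contra fun hne => disjoint_left.1 (hdisj _ _ hne) hja hji
    exact subset_biUnion_of_mem (B ∘ blk) hiS

theorem exists_conj_list_prod_supported (ls : List (Matrix (Fin n → Bool) (Fin n → Bool) ℂ))
    (hls : ∀ L ∈ ls, IsLayer L) (hA : Supported A S) :
    ∃ T : Finset (Fin n), T.card ≤ 2 ^ ls.length * S.card ∧
      Supported ((ls.prod)ᴴ * A * ls.prod) T := by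
  induction ls generalizing A S with
  | nil => exact ⟨S, by simp, by simpa using hA⟩
  | cons L ls ih =>
    obtain ⟨T₁, hT₁, hLA⟩ := (hls L List.mem_cons_self).exists_conj_supported hA
    obtain ⟨T, hT, hsupp⟩ := ih (fun L' hL' => hls L' (List.mem_cons_of_mem _ hL')) hLA
    refine ⟨T, ?_, by rwa [List.prod_cons, conjTranspose_mul_conj]⟩
    calc T.card ≤ 2 ^ ls.length * T₁.card := hT
      _ ≤ 2 ^ ls.length * (2 * S.card) := Nat.mul_le_mul_left _ hT₁
      _ = 2 ^ (L :: ls).length * S.card := by rw [List.length_cons, pow_succ]; ring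

theorem IsLayer.mem_unitary {L : Matrix (Fin n → Bool) (Fin n → Bool) ℂ} (hL : IsLayer L) :
    L ∈ unitary (Matrix (Fin n → Bool) (Fin n → Bool) ℂ) := by
  obtain ⟨r, B, g, -, -, -, hg, rfl⟩ := hL
  refine Submonoid.list_prod_mem _ fun M hM => ?_
  obtain ⟨a, rfl⟩ := List.mem_ofFn.1 hM
  exact Unitary.mem_iff.2 (hg a).2

theorem parityMap_last (hn : 0 < n) (x : Fin n → Bool) :
    parityMap x ⟨n - 1, Nat.sub_lt hn one_pos⟩ = xorAll x := by
  simp [parityMap]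

theorem xorAll_false : xorAll (fun _ : Fin n => false) = false := by
  simp [xorAll]

theorem xorAll_update_false (i : Fin n) :
    xorAll (Function.update (fun _ => false) i true) = true := by
  have : (univ.filter fun k => Function.update (fun _ => false) i true k = true) = {i} := by
    ext k
    simp [Function.update_apply]
  simp [xorAll, this]

theorem diagonal_mul_parityMat (f : (Fin n → Bool) → ℂ) :
    diagonal f * parityMat n = parityMat n * diagonal (f ∘ parityMap) := by
  ext y x
  simp only [diagonal_mul, mul_diagonal, parityMat, Function.comp_apply]
  split_ifs with h <;> simp [h]

theorem conjTranspose_parityMat_mul_diagonal_mul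
    (hU : parityMat n ∈ unitary (Matrix (Fin n → Bool) (Fin n → Bool) ℂ))
    (f : (Fin n → Bool) → ℂ) :
    (parityMat n)ᴴ * diagonal f * parityMat n = diagonal (f ∘ parityMap) := by
  rw [Matrix.mul_assoc, diagonal_mul_parityMat, ← Matrix.mul_assoc,
    ← star_eq_conjTranspose, Unitary.star_mul_self_of_mem hU, Matrix.one_mul]

theorem eq_univ_of_supported_diagonal_xorAll {σ : Bool → ℂ} (hσ : σ.Injective)
    (h : Supported (diagonal (σ ∘ xorAll)) S) : S = univ := by
  refine eq_univ_of_forall fun i => by_contra fun hi => ?_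
  have := supported_diagonal_iff.1 h (fun _ => false) (Function.update (fun _ => false) i true)
    fun j hj => (Function.update_of_ne (ne_of_mem_of_not_mem hj hi) true fun _ => false).symm
  simpa [xorAll_false, xorAll_update_false] using hσ this

/-- If the parity unitary on `n ≥ 2` qubits is written as a
product `L_d ⋯ L₁` of layers of `1`- and `2`-qubit gates, then `n ≤ 2^d`, i.e. the
depth `d` is at least `log₂ n`. -/
theorem parity_depth_lower_bound (n d : ℕ) (hn : 2 ≤ n)
    (L : Fin d → Matrix (Fin n → Bool) (Fin n → Bool) ℂ)
    (hL : ∀ k, IsLayer (L k))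
    (hU : ((List.ofFn L).reverse).prod = parityMat n) :
    n ≤ 2 ^ d := by
  have hlayers : ∀ M ∈ (List.ofFn L).reverse, IsLayer M := by
    simpa only [List.mem_reverse, List.mem_ofFn, forall_exists_index,
      forall_apply_eq_imp_iff] using hL
  have hunitary : parityMat n ∈ unitary (Matrix (Fin n → Bool) (Fin n → Bool) ℂ) :=
    hU ▸ Submonoid.list_prod_mem _ fun M hM => (hlayers M hM).mem_unitary
  have hpos : 0 < n := by omega
  set j : Fin n := ⟨n - 1, Nat.sub_lt hpos one_pos⟩
  set σ : Bool → ℂ := fun b => b.toNat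
  have hσ : σ.Injective := fun a b h => by cases a <;> cases b <;> simp_all [σ]
  have hZ : Supported (diagonal fun x => σ (x j)) {j} :=
    supported_diagonal_iff.2 fun x y h => by rw [h j (mem_singleton_self j)]
  obtain ⟨T, hTcard, hT⟩ := exists_conj_list_prod_supported _ hlayers hZ
  rw [hU, conjTranspose_parityMat_mul_diagonal_mul hunitary] at hT
  have hparity : (fun x => σ (x j)) ∘ parityMap = σ ∘ xorAll :=
    funext fun x => congrArg σ (parityMap_last hpos x)
  rw [hparity] at hT
  rw [eq_univ_of_supported_diagonal_xorAll hσ hT, card_univ, Fintype.card_fin, card_singleton,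
    mul_one, List.length_reverse, List.length_ofFn] at hTcard
  exact hTcard

end ParityDepth
end
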